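/- Suppose a link diagram L and a chain map f : [L] → [L'] satisfy f ∘ α(L) ≃_s H^k · α(L') for some integer k, where ≃_s denotes stable homotopy equivalence (equality after multiplying by some power of H). Then d_H(L) ≤ k + d_H(L'); if moreover f is a chain homotopy equivalence, then d_H(L) = k + d_H(L'). -/
import Mathlib


/- Abstract form of the comparison of H-divisibilities: homotopy classes of
   chain maps [∅] → [L] form a module over R = ℤ[H]; composition with a chain
   map f : [L] → [L'] is an R-linear map; z ≃_s z' iff H^m·z = H^m·z' for
   some m ≥ 0; d_H(L) is the greatest k such that α(L) ≃_s H^k·z for some z.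
   If f∘α(L) ≃_s H^k·α(L') then d_H(L) ≤ k + d_H(L'), with equality when f is
   a chain homotopy equivalence (i.e. bijective on homotopy classes). -/

open Polynomial

/-- Stable (homotopy) equivalence: `x ≃_s y` iff `H^m • x = H^m • y` for some
`m ≥ 0`, where `H = X ∈ ℤ[H]`. -/
def StablyEq {N : Type*} [AddCommGroup N] [Module (Polynomial ℤ) N]
    (x y : N) : Prop :=
  ∃ m : ℕ, ((Polynomial.X : Polynomial ℤ) ^ m) • x = ((Polynomial.X : Polynomial ℤ) ^ m) • y

/-- `HDivisibility α d` : `d` is the maximal `k ≥ 0` such that `H^k • z` is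
stably equivalent to `α` for some `z`. -/
def HDivisibility {N : Type*} [AddCommGroup N] [Module (Polynomial ℤ) N]
    (α : N) (d : ℕ) : Prop :=
  IsGreatest {k : ℕ | ∃ z : N, StablyEq (((Polynomial.X : Polynomial ℤ) ^ k) • z) α} d


private lemma pow_smul_pow_smul {N : Type*} [AddCommGroup N] [Module (Polynomial ℤ) N]
    (a b : ℕ) (x : N) :
    (Polynomial.X : Polynomial ℤ) ^ a • (Polynomial.X : Polynomial ℤ) ^ b • x
      = (Polynomial.X : Polynomial ℤ) ^ (a + b) • x := by
  rw [smul_smul, ← pow_add]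

private lemma pow_smul_congr {N : Type*} [AddCommGroup N] [Module (Polynomial ℤ) N]
    {a b : ℕ} (h : a = b) (x : N) :
    (Polynomial.X : Polynomial ℤ) ^ a • x = (Polynomial.X : Polynomial ℤ) ^ b • x := by
  rw [h]

/-- If a chain map `f : [L] → [L']` (an `ℤ[H]`-linear map on homotopy classes
of chain maps from `[∅]`) satisfies `f ∘ α(L) ≃_s H^k · α(L')`, then
`d_H(L) ≤ k + d_H(L')`; if moreover `f` is a chain homotopy equivalence
(bijective on homotopy classes), then `d_H(L) = k + d_H(L')`. -/
theorem hDivisibility_le_of_chainMap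
    {M M' : Type*} [AddCommGroup M] [AddCommGroup M']
    [Module (Polynomial ℤ) M] [Module (Polynomial ℤ) M']
    (f : M →ₗ[Polynomial ℤ] M') (α : M) (α' : M') (k : ℕ)
    (hf : StablyEq (f α) (((Polynomial.X : Polynomial ℤ) ^ k) • α'))
    (d d' : ℕ) (hd : HDivisibility α d) (hd' : HDivisibility α' d') :
    d ≤ k + d' ∧ (Function.Bijective f → d = k + d') := by
  obtain ⟨⟨z, m, hm⟩, hub⟩ := hd
  obtain ⟨⟨z', m1, hm1⟩, hub'⟩ := hd'
  obtain ⟨m', hm'⟩ := hf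
  -- apply f to hm
  have hfz : (X : ℤ[X]) ^ m • (X : ℤ[X]) ^ d • f z = (X : ℤ[X]) ^ m • f α := by
    have := congrArg f hm
    simpa [map_smul] using this
  have E1 : (X : ℤ[X]) ^ (m' + m + d) • f z = (X : ℤ[X]) ^ (m' + m + k) • α' := by
    calc (X : ℤ[X]) ^ (m' + m + d) • f z
        = (X : ℤ[X]) ^ m' • (X : ℤ[X]) ^ m • (X : ℤ[X]) ^ d • f z := by
          rw [pow_smul_pow_smul, pow_smul_pow_smul, add_assoc]
      _ = (X : ℤ[X]) ^ m' • (X : ℤ[X]) ^ m • f α := by rw [hfz]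
      _ = (X : ℤ[X]) ^ m • (X : ℤ[X]) ^ m' • f α := by
          rw [pow_smul_pow_smul, pow_smul_pow_smul, add_comm m']
      _ = (X : ℤ[X]) ^ m • (X : ℤ[X]) ^ m' • (X : ℤ[X]) ^ k • α' := by rw [hm']
      _ = (X : ℤ[X]) ^ (m' + m + k) • α' := by
          rw [pow_smul_pow_smul, pow_smul_pow_smul]
          exact pow_smul_congr (by omega) _
  have part1 : d ≤ k + d' := by
    by_cases hdk : d ≤ k
    · omega
    · push_neg at hdk
      have hmem : (d - k) ∈ {j : ℕ | ∃ w : M', StablyEq (((X : ℤ[X]) ^ j) • w) α'} := by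
        refine ⟨f z, m' + m + k, ?_⟩
        rw [pow_smul_pow_smul]
        have h1 : m' + m + k + (d - k) = m' + m + d := by omega
        rw [h1, E1]
      have := hub' hmem
      omega
  refine ⟨part1, fun hb => ?_⟩
  set e := LinearEquiv.ofBijective f hb with he
  set g := e.symm with hg
  have hge : ∀ x : M, g (f x) = x := fun x => e.symm_apply_apply x
  have hga : (X : ℤ[X]) ^ m' • α = (X : ℤ[X]) ^ (m' + k) • g α' := by
    have := congrArg g hm'
    simpa [map_smul, hge, pow_smul_pow_smul] using this
  have hgz : (X : ℤ[X]) ^ m1 • (X : ℤ[X]) ^ d' • g z' = (X : ℤ[X]) ^ m1 • g α' := by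
    have := congrArg g hm1
    simpa [map_smul] using this
  have hmem : (k + d') ∈ {j : ℕ | ∃ w : M, StablyEq (((X : ℤ[X]) ^ j) • w) α} := by
    refine ⟨g z', m1 + m', ?_⟩
    calc (X : ℤ[X]) ^ (m1 + m') • (X : ℤ[X]) ^ (k + d') • g z'
        = (X : ℤ[X]) ^ (m' + k) • (X : ℤ[X]) ^ m1 • (X : ℤ[X]) ^ d' • g z' := by
          rw [pow_smul_pow_smul, pow_smul_pow_smul, pow_smul_pow_smul]
          exact pow_smul_congr (by omega) _
      _ = (X : ℤ[X]) ^ (m' + k) • (X : ℤ[X]) ^ m1 • g α' := by rw [hgz]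
      _ = (X : ℤ[X]) ^ m1 • (X : ℤ[X]) ^ (m' + k) • g α' := by
          rw [pow_smul_pow_smul, pow_smul_pow_smul]
          exact pow_smul_congr (by omega) _
      _ = (X : ℤ[X]) ^ m1 • (X : ℤ[X]) ^ m' • α := by rw [← hga]
      _ = (X : ℤ[X]) ^ (m1 + m') • α := pow_smul_pow_smul m1 m' α
  have := hub hmem
  omega
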